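/- arXiv:1811.04739 — 3 statements merged into one kernel-verified Lean document; each statement's English description precedes it below -/
import Mathlib

section
/- Let H₁ and H₂ be complex Hilbert spaces, let A : H₁ → H₁ and B : H₂ → H₂ be bounded positive invertible operators, and let T : H₁ → H₂ be a bounded linear operator with ‖B ∘ T ∘ A⁻¹‖ ≤ M for some M ≥ 0. Then for every a ∈ (0,1) one has ‖B^a ∘ T ∘ A^{−a}‖ ≤ M^a · ‖T‖^{1−a}, where A^{−a} = (A^a)⁻¹ and the fractional powers A^a, B^a are given by the continuous functional calculus. -/
open NormedSpace Complex ContinuousLinearMap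

section HKAux

variable {𝓐 : Type*} [CStarAlgebra 𝓐]

noncomputable def hkRatAlg : NormedAlgebra ℚ 𝓐 := .restrictScalars ℚ ℂ 𝓐

attribute [local instance] hkRatAlg

/-- If `x * y = 1` and `y * x = 1` then `Ring.inverse x = y`. -/
lemma hk_ring_inverse_eq {R : Type*} [Ring R] {x y : R} (h1 : x * y = 1) (h2 : y * x = 1) :
    Ring.inverse x = y := by
  have : Ring.inverse ((⟨x, y, h1, h2⟩ : Rˣ) : R) = y := Ring.inverse_unit _
  simpa using this

lemma hk_exp_mul_exp_neg (S : 𝓐) : exp S * exp (-S) = 1 := by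
  rw [← exp_add_of_commute ((Commute.refl S).neg_right), add_neg_cancel, NormedSpace.exp_zero]

lemma hk_exp_neg_mul_exp (S : 𝓐) : exp (-S) * exp S = 1 := by
  rw [← exp_add_of_commute ((Commute.refl S).neg_left), neg_add_cancel, NormedSpace.exp_zero]

/-- `exp` of a purely imaginary multiple of a selfadjoint element is unitary (has norm one). -/
lemma hk_norm_exp_I_smul [Nontrivial 𝓐] (L : 𝓐) (hL : IsSelfAdjoint L) (t : ℝ) :
    ‖exp (((t : ℂ) * I) • L)‖ = 1 := by
  set u := exp (((t : ℂ) * I) • L) with hu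
  have hstar : star u = exp ((-((t : ℂ) * I)) • L) := by
    rw [hu, star_exp, star_smul, hL.star_eq]
    congr 1
    simp [Complex.ext_iff]
  have hcomm : Commute ((-((t : ℂ) * I)) • L) (((t : ℂ) * I) • L) :=
    ((Commute.refl L).smul_left _).smul_right _
  have h1 : star u * u = 1 := by
    rw [hstar, hu, ← exp_add_of_commute hcomm, neg_smul, neg_add_cancel, NormedSpace.exp_zero]
  have h2 : ‖u‖ * ‖u‖ = 1 := by
    rw [← CStarRing.norm_star_mul_self, h1, norm_one]
  nlinarith [norm_nonneg u]

lemma hk_exp_smul_split (L : 𝓐) (z : ℂ) :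
    exp (z • L) = exp ((z.re : ℂ) • L) * exp (((z.im : ℂ) * I) • L) := by
  rw [← exp_add_of_commute (((Commute.refl L).smul_left _).smul_right _), ← add_smul,
    Complex.re_add_im]

lemma hk_exp_real_smul (L : 𝓐) (r : ℝ) : exp ((r : ℂ) • L) = exp (r • L) := by
  rw [show ((r : ℂ) • L) = r • L by rw [← algebraMap_smul ℂ r L]; norm_num]

lemma hk_norm_exp_real [Nontrivial 𝓐] (L : 𝓐) (hL : IsSelfAdjoint L) (r : ℝ) :
    ‖exp ((r : ℂ) • L)‖ ≤ Real.exp (|r| * ‖L‖) := by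
  rw [hk_exp_real_smul,
    ← CFC.real_exp_eq_normedSpace_exp ((IsSelfAdjoint.all r).smul hL)]
  refine norm_cfc_le (Real.exp_nonneg _) fun x hx => ?_
  rw [Real.norm_eq_abs, Real.abs_exp]
  refine Real.exp_le_exp.mpr ?_
  calc x ≤ |x| := le_abs_self x
  _ = ‖x‖ := rfl
  _ ≤ ‖r • L‖ := spectrum.norm_le_norm_of_mem hx
  _ = |r| * ‖L‖ := by rw [norm_smul, Real.norm_eq_abs]

lemma hk_norm_exp_le [Nontrivial 𝓐] (L : 𝓐) (hL : IsSelfAdjoint L) (z : ℂ) :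
    ‖exp (z • L)‖ ≤ Real.exp (|z.re| * ‖L‖) := by
  rw [hk_exp_smul_split]
  calc ‖exp ((z.re : ℂ) • L) * exp (((z.im : ℂ) * I) • L)‖
      ≤ ‖exp ((z.re : ℂ) • L)‖ * ‖exp (((z.im : ℂ) * I) • L)‖ := norm_mul_le _ _
  _ ≤ Real.exp (|z.re| * ‖L‖) * 1 := by
      rw [hk_norm_exp_I_smul L hL z.im]
      simp only [mul_one]
      exact hk_norm_exp_real L hL z.re
  _ = Real.exp (|z.re| * ‖L‖) := mul_one _

variable [PartialOrder 𝓐] [StarOrderedRing 𝓐]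

/-- `exp (t • log a) = a ^ t` for a positive invertible element. -/
lemma hk_exp_smul_log (a : 𝓐) (ha : 0 ≤ a) (ha' : ∀ x ∈ spectrum ℝ a, 0 < x) (t : ℝ) :
    exp (t • CFC.log a) = a ^ t := by
  have hsa : IsSelfAdjoint a := .of_nonneg ha
  have hzero : (0 : ℝ) ∉ spectrum ℝ a := fun h => lt_irrefl 0 (ha' 0 h)
  have hlogcont : ContinuousOn Real.log (spectrum ℝ a) :=
    Real.continuousOn_log.mono (fun x hx => fun (h : x = 0) => hzero (h ▸ hx))
  have hfc : ContinuousOn (fun x : ℝ => t * Real.log x) (spectrum ℝ a) :=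
    continuousOn_const.mul hlogcont
  have hlog : t • CFC.log a = cfc (fun x : ℝ => t * Real.log x) a := by
    rw [CFC.log, ← cfc_const_mul t Real.log a hlogcont]
  rw [hlog, ← CFC.real_exp_eq_normedSpace_exp (cfc_predicate _ a),
    ← cfc_comp Real.exp (fun x : ℝ => t * Real.log x) a hsa
      (Real.continuous_exp.continuousOn) hfc]
  rw [CFC.rpow_def, cfc_nnreal_eq_real (fun x : NNReal => x ^ t) a ha]
  refine cfc_congr fun x hx => ?_
  have hx' : 0 < x := ha' x hx
  simp only [Function.comp_apply, NNReal.rpow_eq_pow, NNReal.coe_rpow,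
    Real.coe_toNNReal x hx'.le]
  rw [Real.rpow_def_of_pos hx', mul_comm]

end HKAux

set_option maxHeartbeats 2000000 in
/-- **Heinz–Kato inequality, operator-norm form** (the conclusion
`‖B^a T A^(-a) w‖ ≤ M^a ‖T‖^(1-a) ‖w‖` from the proof of Theorem 3 of the paper,
stated for bounded positive invertible operators).  Here `A⁻¹` and `(A^a)⁻¹`
are taken via `Ring.inverse` in the ring of bounded operators, and the
fractional powers are given by the continuous functional calculus. -/
theorem heinz_kato_norm
    {H₁ H₂ : Type*} [NormedAddCommGroup H₁] [InnerProductSpace ℂ H₁] [CompleteSpace H₁]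
    [NormedAddCommGroup H₂] [InnerProductSpace ℂ H₂] [CompleteSpace H₂]
    (A : H₁ →L[ℂ] H₁) (B : H₂ →L[ℂ] H₂) (T : H₁ →L[ℂ] H₂)
    (hA : 0 ≤ A) (hB : 0 ≤ B) (hAinv : IsUnit A) (hBinv : IsUnit B)
    (M : ℝ) (hM : 0 ≤ M)
    (hT : ‖B.comp (T.comp (Ring.inverse A))‖ ≤ M)
    (a : ℝ) (ha : a ∈ Set.Ioo (0 : ℝ) 1) :
    ‖(B ^ a).comp (T.comp (Ring.inverse (A ^ a)))‖ ≤ M ^ a * ‖T‖ ^ (1 - a) := by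
  obtain ⟨ha0, ha1⟩ := ha
  have hRHS : 0 ≤ M ^ a * ‖T‖ ^ (1 - a) :=
    mul_nonneg (Real.rpow_nonneg hM a) (Real.rpow_nonneg (norm_nonneg T) _)
  rcases subsingleton_or_nontrivial H₁ with hH₁ | hH₁
  · have h0 : (B ^ a).comp (T.comp (Ring.inverse (A ^ a))) = 0 := by
      ext x
      rw [Subsingleton.elim x 0]
      simp
    rw [h0, norm_zero]; exact hRHS
  rcases subsingleton_or_nontrivial H₂ with hH₂ | hH₂
  · have h0 : (B ^ a).comp (T.comp (Ring.inverse (A ^ a))) = 0 := by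
      ext x
      exact Subsingleton.elim _ _
    rw [h0, norm_zero]; exact hRHS
  have hNT₁ : Nontrivial (H₁ →L[ℂ] H₁) := by
    obtain ⟨x, hx⟩ := exists_ne (0 : H₁)
    exact ⟨1, 0, fun h => hx (by simpa using DFunLike.congr_fun h x)⟩
  have hNT₂ : Nontrivial (H₂ →L[ℂ] H₂) := by
    obtain ⟨x, hx⟩ := exists_ne (0 : H₂)
    exact ⟨1, 0, fun h => hx (by simpa using DFunLike.congr_fun h x)⟩
  -- setup
  set LA := CFC.log A with hLA
  set LB := CFC.log B with hLB
  have hsaA : IsSelfAdjoint A := .of_nonneg hA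
  have hsaB : IsSelfAdjoint B := .of_nonneg hB
  have hApos : ∀ x ∈ spectrum ℝ A, 0 < x := fun x hx =>
    lt_of_le_of_ne (spectrum_nonneg_of_nonneg hA hx)
      (by rintro rfl; exact spectrum.zero_notMem ℝ hAinv hx)
  have hBpos : ∀ x ∈ spectrum ℝ B, 0 < x := fun x hx =>
    lt_of_le_of_ne (spectrum_nonneg_of_nonneg hB hx)
      (by rintro rfl; exact spectrum.zero_notMem ℝ hBinv hx)
  have hsaLA : IsSelfAdjoint LA := IsSelfAdjoint.log
  have hsaLB : IsSelfAdjoint LB := IsSelfAdjoint.log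
  have hexpA : ∀ t : ℝ, NormedSpace.exp (t • LA) = A ^ t := hk_exp_smul_log A hA hApos
  have hexpB : ∀ t : ℝ, NormedSpace.exp (t • LB) = B ^ t := hk_exp_smul_log B hB hBpos
  have hA1 : NormedSpace.exp LA = A := CFC.exp_log A (hAinv.isStrictlyPositive hA)
  have hB1 : NormedSpace.exp LB = B := CFC.exp_log B (hBinv.isStrictlyPositive hB)
  have hinvA : Ring.inverse A = NormedSpace.exp (-LA) := by
    refine hk_ring_inverse_eq ?_ ?_
    · rw [← hA1]; exact hk_exp_mul_exp_neg LA
    · rw [← hA1]; exact hk_exp_neg_mul_exp LA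
  have hinvAa : Ring.inverse (A ^ a) = NormedSpace.exp (-(a • LA)) := by
    refine hk_ring_inverse_eq ?_ ?_
    · rw [← hexpA a]; exact hk_exp_mul_exp_neg _
    · rw [← hexpA a]; exact hk_exp_neg_mul_exp _
  -- the analytic family
  set f : ℂ → (H₁ →L[ℂ] H₂) := fun z =>
    (NormedSpace.exp (z • LB)).comp (T.comp (NormedSpace.exp ((-z) • LA))) with hfdef
  have hgB : Differentiable ℂ (fun z : ℂ => NormedSpace.exp (z • LB)) :=
    fun t => (hasDerivAt_exp_smul_const LB t).differentiableAt
  have hgA0 : Differentiable ℂ (fun w : ℂ => NormedSpace.exp (w • LA)) :=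
    fun t => (hasDerivAt_exp_smul_const LA t).differentiableAt
  have hgA : Differentiable ℂ (fun z : ℂ => NormedSpace.exp ((-z) • LA)) := by
    exact hgA0.comp differentiable_neg
  have hdf : Differentiable ℂ f :=
    Differentiable.clm_comp hgB ((differentiable_const T).clm_comp hgA)
  -- norm bound on the strip
  have hnormf : ∀ z : ℂ, ‖f z‖ ≤
      Real.exp (|z.re| * ‖LB‖) * ‖T‖ * Real.exp (|z.re| * ‖LA‖) := by
    intro z
    have h1 : ‖f z‖ ≤ ‖NormedSpace.exp (z • LB)‖ *
        (‖T‖ * ‖NormedSpace.exp ((-z) • LA)‖) :=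
      (opNorm_comp_le _ _).trans (by gcongr; exact opNorm_comp_le _ _)
    have h2 := hk_norm_exp_le LB hsaLB z
    have h3 := hk_norm_exp_le LA hsaLA (-z)
    rw [Complex.neg_re, abs_neg] at h3
    calc ‖f z‖ ≤ ‖NormedSpace.exp (z • LB)‖ *
        (‖T‖ * ‖NormedSpace.exp ((-z) • LA)‖) := h1
    _ ≤ Real.exp (|z.re| * ‖LB‖) * (‖T‖ * Real.exp (|z.re| * ‖LA‖)) := by
        gcongr
    _ = Real.exp (|z.re| * ‖LB‖) * ‖T‖ * Real.exp (|z.re| * ‖LA‖) := by ring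
  have hBdd : BddAbove ((norm ∘ f) ''
      (Complex.HadamardThreeLines.verticalClosedStrip 0 1)) := by
    refine ⟨Real.exp ‖LB‖ * ‖T‖ * Real.exp ‖LA‖, ?_⟩
    rintro - ⟨z, hz, rfl⟩
    have hre : |z.re| ≤ 1 := abs_le.mpr ⟨by linarith [hz.1], hz.2⟩
    refine (hnormf z).trans ?_
    have h1 : |z.re| * ‖LB‖ ≤ ‖LB‖ := by
      calc |z.re| * ‖LB‖ ≤ 1 * ‖LB‖ := by gcongr
      _ = ‖LB‖ := one_mul _
    have h2 : |z.re| * ‖LA‖ ≤ ‖LA‖ := by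
      calc |z.re| * ‖LA‖ ≤ 1 * ‖LA‖ := by gcongr
      _ = ‖LA‖ := one_mul _
    exact mul_le_mul (mul_le_mul (Real.exp_le_exp.mpr h1) le_rfl (norm_nonneg T)
      (Real.exp_nonneg _)) (Real.exp_le_exp.mpr h2) (Real.exp_nonneg _)
      (mul_nonneg (Real.exp_nonneg _) (norm_nonneg T))
  -- edge re = 0
  have hedge0 : ∀ z : ℂ, z.re = 0 → ‖f z‖ ≤ ‖T‖ := by
    intro z hz
    have h2 := hk_norm_exp_le LB hsaLB z
    have h3 := hk_norm_exp_le LA hsaLA (-z)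
    rw [hz] at h2
    rw [Complex.neg_re, abs_neg, hz] at h3
    simp only [abs_zero, zero_mul, Real.exp_zero] at h2 h3
    calc ‖f z‖ ≤ ‖NormedSpace.exp (z • LB)‖ *
        (‖T‖ * ‖NormedSpace.exp ((-z) • LA)‖) :=
      (opNorm_comp_le _ _).trans (by gcongr; exact opNorm_comp_le _ _)
    _ ≤ 1 * (‖T‖ * 1) := by gcongr
    _ = ‖T‖ := by ring
  -- edge re = 1
  have hedge1 : ∀ z : ℂ, z.re = 1 → ‖f z‖ ≤ M := by
    intro z hz
    set U := NormedSpace.exp (((z.im : ℂ) * I) • LB) with hU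
    set V := NormedSpace.exp ((((-z).im : ℂ) * I) • LA) with hV
    have hUnorm : ‖U‖ = 1 := hk_norm_exp_I_smul LB hsaLB z.im
    have hVnorm : ‖V‖ = 1 := hk_norm_exp_I_smul LA hsaLA (-z).im
    have hsplitB : NormedSpace.exp (z • LB) = B * U := by
      rw [hk_exp_smul_split LB z, hz]
      congr 1
      rw [hk_exp_real_smul LB 1, one_smul, hB1]
    have hsplitA : NormedSpace.exp ((-z) • LA) = Ring.inverse A * V := by
      rw [hk_exp_smul_split LA (-z)]
      congr 1
      rw [show (((-z).re : ℝ) : ℂ) = ((-1 : ℝ) : ℂ) by rw [Complex.neg_re, hz],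
        hk_exp_real_smul, neg_smul, one_smul, hinvA]
    have hBexp : NormedSpace.exp ((1 : ℂ) • LB) = B := by
      rw [show ((1 : ℂ)) = ((1 : ℝ) : ℂ) by norm_num, hk_exp_real_smul LB 1, one_smul, hB1]
    have hcommB : B * U = U * B := by
      rw [← hBexp]
      exact ((((Commute.refl LB).smul_left ((1 : ℂ))).smul_right
        ((z.im : ℂ) * I)).exp ).eq
    have hfz : f z = U.comp ((B.comp (T.comp (Ring.inverse A))).comp V) := by
      rw [hfdef]
      simp only [hsplitB, hsplitA, hcommB]
      ext x
      simp [ContinuousLinearMap.mul_apply]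
    rw [hfz]
    calc ‖U.comp ((B.comp (T.comp (Ring.inverse A))).comp V)‖
        ≤ ‖U‖ * (‖B.comp (T.comp (Ring.inverse A))‖ * ‖V‖) :=
      (opNorm_comp_le _ _).trans (by gcongr; exact opNorm_comp_le _ _)
    _ ≤ 1 * (M * 1) := by
        rw [hUnorm, hVnorm]; gcongr
    _ = M := by ring
  -- value at a
  have hfa : f (a : ℂ) = (B ^ a).comp (T.comp (Ring.inverse (A ^ a))) := by
    rw [hfdef]
    simp only
    rw [hk_exp_real_smul LB a, hexpB a,
      show (-(a : ℂ)) • LA = ((-a : ℝ) : ℂ) • LA by norm_num,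
      hk_exp_real_smul LA (-a), neg_smul, ← hinvAa]
  -- apply the three lines theorem
  have hmem : (a : ℂ) ∈ Complex.HadamardThreeLines.verticalClosedStrip 0 1 := by
    simp only [Complex.HadamardThreeLines.verticalClosedStrip, Set.mem_preimage,
      Complex.ofReal_re, Set.mem_Icc]
    exact ⟨ha0.le, ha1.le⟩
  have h3l := Complex.HadamardThreeLines.norm_le_interp_of_mem_verticalClosedStrip₀₁' f
    hmem (hdf.diffContOnCl) hBdd
    (fun z hz => hedge0 z hz) (fun z hz => hedge1 z hz)
  rw [Complex.ofReal_re] at h3l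
  rw [← hfa]
  calc ‖f (a : ℂ)‖ ≤ ‖T‖ ^ (1 - a) * M ^ a := h3l
  _ = M ^ a * ‖T‖ ^ (1 - a) := mul_comm _ _
end

section
/- Let 𝒜 be a unital complex Banach algebra and let a ∈ 𝒜. Suppose there is K ≥ 1 such that for every real s ≥ 0 the element a + s·1 is invertible and (1 + s)·‖(a + s·1)⁻¹‖ ≤ K. Then for every complex number λ in the set Ω_K = {λ ∈ ℂ : |arg λ| ≤ arcsin(1/(2K))} ∪ {λ ∈ ℂ : |λ| ≤ 1/(2K)}, the element a + λ·1 is invertible and (1 + |λ|)·‖(a + λ·1)⁻¹‖ ≤ 2K + 1. -/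
open Complex

lemma aux_sect {𝒜 : Type*} [NormedRing 𝒜] [NormedAlgebra ℂ 𝒜] [CompleteSpace 𝒜]
    (a : 𝒜) (K s : ℝ) (lam : ℂ)
    (hu : IsUnit (a + (s : ℂ) • 1))
    (hb : (1 + s) * ‖Ring.inverse (a + (s : ℂ) • 1)‖ ≤ K)
    (hs : 0 ≤ s)
    (hd : ‖lam - s‖ * K < 1 + s) :
    IsUnit (a + lam • 1) ∧
      ‖Ring.inverse (a + lam • 1)‖ * (1 + s - ‖lam - s‖ * K) ≤ K := by
  set u := hu.unit with hu_def
  have hus : (u : 𝒜) = a + (s : ℂ) • 1 := hu.unit_spec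
  set r : ℝ := ‖((u⁻¹ : 𝒜ˣ) : 𝒜)‖ with hr_def
  have hr : Ring.inverse (a + (s : ℂ) • 1) = ((u⁻¹ : 𝒜ˣ) : 𝒜) := by
    rw [← hus, Ring.inverse_unit]
  have hb' : (1 + s) * r ≤ K := by rwa [hr] at hb
  set d : ℝ := ‖lam - s‖ with hd_def
  have hd0 : (0 : ℝ) ≤ d := norm_nonneg _
  have hr0 : (0 : ℝ) ≤ r := norm_nonneg _
  have h1s : (0 : ℝ) < 1 + s := by linarith
  have hK0 : (0 : ℝ) ≤ K := le_trans (by positivity) hb'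
  have hdr : d * r < 1 := by nlinarith [mul_le_mul_of_nonneg_left hb' hd0]
  set c : 𝒜 := (lam - (s : ℂ)) • ((u⁻¹ : 𝒜ˣ) : 𝒜) with hc_def
  have hc : ‖c‖ = d * r := by
    rw [hc_def, norm_smul]
  have hcu : ‖-c‖ < 1 := by rwa [norm_neg, hc]
  set v : 𝒜ˣ := Units.oneSub (-c) hcu with hv_def
  have hv : (v : 𝒜) = 1 + c := by
    rw [hv_def, Units.val_oneSub, sub_neg_eq_add]
  have key : a + lam • 1 = (u : 𝒜) * (v : 𝒜) := by
    rw [hv, mul_add, mul_one, hc_def, mul_smul_comm, u.mul_inv, hus, add_assoc, ← add_smul]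
    congr 2
    ring
  have hunit : IsUnit (a + lam • 1) := by
    rw [key]; exact u.isUnit.mul v.isUnit
  set w := Ring.inverse (a + lam • 1) with hw_def
  have hw1 : (a + lam • 1) * w = 1 := Ring.mul_inverse_cancel _ hunit
  have hw2 : w + c * w = ((u⁻¹ : 𝒜ˣ) : 𝒜) := by
    have e1 : ((u⁻¹ : 𝒜ˣ) : 𝒜) * (a + lam • 1) = 1 + c := by
      rw [key, ← mul_assoc, u.inv_mul, one_mul, hv]
    calc w + c * w = (1 + c) * w := by rw [add_mul, one_mul]
      _ = ((u⁻¹ : 𝒜ˣ) : 𝒜) * ((a + lam • 1) * w) := by rw [← e1, mul_assoc]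
      _ = ((u⁻¹ : 𝒜ˣ) : 𝒜) := by rw [hw1, mul_one]
  have hwn : ‖w‖ ≤ r + d * r * ‖w‖ := by
    have : w = ((u⁻¹ : 𝒜ˣ) : 𝒜) - c * w := eq_sub_of_add_eq hw2
    calc ‖w‖ = ‖((u⁻¹ : 𝒜ˣ) : 𝒜) - c * w‖ := by rw [← this]
      _ ≤ r + ‖c * w‖ := norm_sub_le _ _
      _ ≤ r + ‖c‖ * ‖w‖ := by gcongr; exact norm_mul_le _ _
      _ = r + d * r * ‖w‖ := by rw [hc]
  refine ⟨hunit, ?_⟩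
  nlinarith [norm_nonneg w, hwn, hb', hd0, hs,
    mul_nonneg (norm_nonneg w) (mul_nonneg hd0 (sub_nonneg.2 hb')),
    mul_le_mul_of_nonneg_left hwn (le_of_lt h1s)]

lemma caseA_sect {𝒜 : Type*} [NormedRing 𝒜] [NormedAlgebra ℂ 𝒜] [CompleteSpace 𝒜]
    (a : 𝒜) (K : ℝ) (hK : 1 ≤ K)
    (h : ∀ s : ℝ, 0 ≤ s → IsUnit (a + (s : ℂ) • 1) ∧
      (1 + s) * ‖Ring.inverse (a + (s : ℂ) • 1)‖ ≤ K)
    (lam : ℂ) (hsmall : ‖lam‖ ≤ 1 / (2 * K)) :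
      IsUnit (a + lam • 1) ∧ (1 + ‖lam‖) * ‖Ring.inverse (a + lam • 1)‖ ≤ 2 * K + 1 := by
  have hK0 : (0 : ℝ) < K := lt_of_lt_of_le one_pos hK
  obtain ⟨hu, hb⟩ := h 0 le_rfl
  set t := ‖lam‖ with ht_def
  have ht0 : 0 ≤ t := norm_nonneg _
  have htK : t * K ≤ 1 / 2 := by
    calc t * K ≤ 1 / (2 * K) * K := mul_le_mul_of_nonneg_right hsmall hK0.le
      _ = 1 / 2 := by field_simp
  have hd : ‖lam - ((0 : ℝ) : ℂ)‖ * K < 1 + 0 := by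
    rw [Complex.ofReal_zero, sub_zero, ← ht_def]
    linarith
  obtain ⟨h1, h2⟩ := aux_sect a K 0 lam hu hb le_rfl hd
  rw [Complex.ofReal_zero, sub_zero, ← ht_def] at h2
  refine ⟨h1, ?_⟩
  nlinarith [norm_nonneg (Ring.inverse (a + lam • 1)), h2, ht0, htK,
    mul_le_mul_of_nonneg_left h2 (by linarith : (0:ℝ) ≤ 1 + t)]

set_option maxHeartbeats 1000000 in
lemma caseB_sect {𝒜 : Type*} [NormedRing 𝒜] [NormedAlgebra ℂ 𝒜] [CompleteSpace 𝒜]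
    (a : 𝒜) (K : ℝ) (hK : 1 ≤ K)
    (h : ∀ s : ℝ, 0 ≤ s → IsUnit (a + (s : ℂ) • 1) ∧
      (1 + s) * ‖Ring.inverse (a + (s : ℂ) • 1)‖ ≤ K)
    (lam : ℂ) (hlam0 : lam ≠ 0)
    (harg : |lam.arg| ≤ Real.arcsin (1 / (2 * K))) :
      IsUnit (a + lam • 1) ∧ (1 + ‖lam‖) * ‖Ring.inverse (a + lam • 1)‖ ≤ 2 * K + 1 := by
  have hK0 : (0 : ℝ) < K := lt_of_lt_of_le one_pos hK
  set t := ‖lam‖ with ht_def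
  have ht0 : 0 ≤ t := norm_nonneg _
  have htpos : 0 < t := norm_pos_iff.mpr hlam0
  have hx0 : (0:ℝ) < 1 / (2 * K) := by positivity
  have hx1 : 1 / (2 * K) ≤ 1 := by
    rw [div_le_one (by linarith)]; linarith
  have hxm1 : (-1 : ℝ) ≤ 1 / (2 * K) := by linarith
  have harcle : Real.arcsin (1 / (2 * K)) ≤ Real.pi / 2 := Real.arcsin_le_pi_div_two _
  have hsin : Real.sin |lam.arg| ≤ 1 / (2 * K) := by
    have := Real.sin_le_sin_of_le_of_le_pi_div_two
      (le_trans (by linarith [Real.pi_pos]) (abs_nonneg lam.arg)) harcle harg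
    rwa [Real.sin_arcsin hxm1 hx1] at this
  have hargle : |lam.arg| ≤ Real.pi / 2 := le_trans harg harcle
  have hsinabs : |Real.sin lam.arg| = Real.sin |lam.arg| := by
    rcases le_or_gt 0 lam.arg with hpos | hneg
    · rw [_root_.abs_of_nonneg hpos, _root_.abs_of_nonneg
        (Real.sin_nonneg_of_nonneg_of_le_pi hpos (by
          rw [_root_.abs_of_nonneg hpos] at hargle; linarith [Real.pi_pos]))]
    · have hx : -lam.arg ≤ Real.pi := by
        rw [_root_.abs_of_neg hneg] at hargle; linarith [Real.pi_pos]
      have h5 : 0 ≤ Real.sin (-lam.arg) :=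
        Real.sin_nonneg_of_nonneg_of_le_pi (by linarith) hx
      rw [Real.sin_neg] at h5
      rw [_root_.abs_of_neg hneg, Real.sin_neg, _root_.abs_of_nonpos (by linarith)]
  have him : |lam.im| ≤ t / (2 * K) := by
    have h1 : Real.sin lam.arg = lam.im / t := Complex.sin_arg lam
    have h6 : |lam.im| / t = Real.sin |lam.arg| := by
      rw [← hsinabs, h1, abs_div, _root_.abs_of_nonneg ht0]
    calc |lam.im| = t * (|lam.im| / t) := by field_simp
      _ = t * Real.sin |lam.arg| := by rw [h6]
      _ ≤ t * (1 / (2 * K)) := by gcongr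
      _ = t / (2 * K) := by ring
  set cc := Real.sqrt (1 - (1 / (2 * K)) ^ 2) with hcc_def
  have hcos : cc ≤ Real.cos |lam.arg| := by
    have := Real.cos_le_cos_of_nonneg_of_le_pi (abs_nonneg lam.arg)
      (by linarith [Real.pi_pos] : Real.arcsin (1 / (2 * K)) ≤ Real.pi) harg
    rwa [Real.cos_arcsin] at this
  have hre : cc * t ≤ lam.re := by
    have h2 : Real.cos lam.arg = lam.re / t := Complex.cos_arg hlam0
    have h3 : lam.re = t * Real.cos lam.arg := by rw [h2]; field_simp
    rw [h3, ← Real.cos_abs lam.arg]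
    calc cc * t = t * cc := by ring
      _ ≤ t * Real.cos |lam.arg| := by gcongr
  have hcc1 : 4 * K + 1 ≤ (4 * K + 2) * cc := by
    have key : (4 * K + 1) ^ 2 * (2 * K) ^ 2 ≤ ((2 * K) ^ 2 - 1) * (4 * K + 2) ^ 2 := by
      nlinarith [mul_nonneg (mul_nonneg (sub_nonneg.2 hK) hK0.le) hK0.le,
        mul_nonneg (sub_nonneg.2 hK) hK0.le, hK]
    have h4 : (4 * K + 1) / (4 * K + 2) ≤ cc := by
      rw [hcc_def, Real.le_sqrt (by positivity) (by nlinarith [hx0, hx1])]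
      have expand : 1 - (1 / (2 * K)) ^ 2 = ((2 * K) ^ 2 - 1) / (2 * K) ^ 2 := by
        field_simp
      rw [expand, div_pow, div_le_div_iff₀ (by positivity) (by positivity)]
      exact key
    calc 4 * K + 1 = ((4 * K + 1) / (4 * K + 2)) * (4 * K + 2) := by field_simp
      _ ≤ cc * (4 * K + 2) := mul_le_mul_of_nonneg_right h4 (by linarith)
      _ = (4 * K + 2) * cc := by ring
  have hcchalf : 1 / 2 ≤ cc := by nlinarith [hcc1, hK]
  have hs0 : 0 ≤ lam.re := le_trans (by positivity) hre
  obtain ⟨hu, hb⟩ := h lam.re hs0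
  have habs : ‖lam - (lam.re : ℝ)‖ = |lam.im| := by
    have e : lam - ((lam.re : ℝ) : ℂ) = (lam.im : ℂ) * I := by
      apply Complex.ext <;> simp
    rw [e, norm_mul, Complex.norm_I, Complex.norm_real, Real.norm_eq_abs, mul_one]
  have hdK : ‖lam - (lam.re : ℝ)‖ * K ≤ t / 2 := by
    rw [habs]
    calc |lam.im| * K ≤ t / (2 * K) * K := by gcongr
      _ = t / 2 := by field_simp
  have hhalf : t / 2 ≤ cc * t := by nlinarith [mul_le_mul_of_nonneg_right hcchalf ht0]
  have hd : ‖lam - (lam.re : ℝ)‖ * K < 1 + lam.re := by linarith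
  obtain ⟨h1, h2⟩ := aux_sect a K lam.re lam hu hb hs0 hd
  refine ⟨h1, ?_⟩
  set W := ‖Ring.inverse (a + lam • 1)‖ with hW_def
  have hW0 : 0 ≤ W := norm_nonneg _
  set d := ‖lam - (lam.re : ℝ)‖ with hd_def
  have hP : 1 ≤ 1 + lam.re - d * K := by linarith
  have p1 : (4 * K + 1) * t ≤ (4 * K + 2) * cc * t :=
    mul_le_mul_of_nonneg_right hcc1 ht0
  have p2 : 0 ≤ (2 * K + 1) * (lam.re - cc * t) :=
    mul_nonneg (by linarith) (sub_nonneg.2 hre)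
  have p3 : 0 ≤ (2 * K + 1) * (t / 2 - d * K) :=
    mul_nonneg (by linarith) (sub_nonneg.2 hdK)
  have hP2 : (1 + t) * K ≤ (2 * K + 1) * (1 + lam.re - d * K) := by linarith [p1, p2, p3]
  nlinarith [hP, hP2, mul_le_mul_of_nonneg_left h2 (show (0:ℝ) ≤ 1 + t by linarith)]

/-- **Resolvent perturbation estimate for invertible sectorial elements.**
If `a` is an element of a unital complex Banach algebra such that `a + s·1` is
invertible for every `s ≥ 0` with `(1 + s)‖(a + s·1)⁻¹‖ ≤ K`, then for every `λ`
in the region `Ω_K = {λ : |arg λ| ≤ arcsin (1/(2K))} ∪ {λ : |λ| ≤ 1/(2K)}`,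
the element `a + λ·1` is invertible and `(1 + |λ|)‖(a + λ·1)⁻¹‖ ≤ 2K + 1`. -/
theorem invertible_sectorial_resolvent_estimate
    {𝒜 : Type*} [NormedRing 𝒜] [NormedAlgebra ℂ 𝒜] [CompleteSpace 𝒜]
    (a : 𝒜) (K : ℝ) (hK : 1 ≤ K)
    (h : ∀ s : ℝ, 0 ≤ s → IsUnit (a + (s : ℂ) • 1) ∧
      (1 + s) * ‖Ring.inverse (a + (s : ℂ) • 1)‖ ≤ K) :
    ∀ lam : ℂ, (|lam.arg| ≤ Real.arcsin (1 / (2 * K)) ∨ ‖lam‖ ≤ 1 / (2 * K)) →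
      IsUnit (a + lam • 1) ∧ (1 + ‖lam‖) * ‖Ring.inverse (a + lam • 1)‖ ≤ 2 * K + 1 := by
  intro lam hlam
  by_cases hsmall : ‖lam‖ ≤ 1 / (2 * K)
  · exact caseA_sect a K hK h lam hsmall
  · have harg := hlam.resolve_right hsmall
    have hlam0 : lam ≠ 0 := by
      rintro rfl
      exact hsmall (by rw [norm_zero]; exact div_nonneg zero_le_one (by linarith))
    exact caseB_sect a K hK h lam hlam0 harg
end

section
/- Let 𝒜 be a unital C*-algebra and let a be a positive invertible element of 𝒜. Then for every α ∈ (0,1), the function s ↦ s^{−α}(a + s·1)⁻¹ is Bochner integrable on (0,∞) with values in 𝒜, and a^{−α} = (sin(πα)/π) · ∫₀^∞ s^{−α} (a + s·1)⁻¹ ds, where a^{−α} denotes the continuous functional calculus power of a with exponent −α. -/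
open MeasureTheory Real Set
open scoped NNReal

lemma balayage_aux_integrableOn {α c : ℝ} (hα0 : 0 < α) (hα1 : α < 1) (hc : 0 < c) :
    IntegrableOn (fun s : ℝ => s ^ (-α) * (c + s)⁻¹) (Set.Ioi 0) volume := by
  have hmeas : ∀ u : Set ℝ, AEStronglyMeasurable (fun s : ℝ => s ^ (-α) * (c + s)⁻¹)
      (volume.restrict u) := fun u =>
    (by fun_prop : Measurable (fun s : ℝ => s ^ (-α) * (c + s)⁻¹)).aestronglyMeasurable
  rw [← Set.Ioc_union_Ioi_eq_Ioi (zero_le_one : (0:ℝ) ≤ 1)]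
  apply IntegrableOn.union
  · -- on Ioc 0 1
    have hbase : IntegrableOn (fun s : ℝ => s ^ (-α) * c⁻¹) (Ioc 0 1) volume := by
      have h1 : IntervalIntegrable (fun s : ℝ => s ^ (-α)) volume 0 1 :=
        intervalIntegral.intervalIntegrable_rpow' (by linarith)
      rw [intervalIntegrable_iff_integrableOn_Ioc_of_le zero_le_one] at h1
      exact h1.mul_const _
    refine Integrable.mono' hbase (hmeas _) ?_
    filter_upwards [ae_restrict_mem measurableSet_Ioc] with s hs
    have hs0 : 0 < s := hs.1
    rw [Real.norm_eq_abs, abs_mul, abs_of_nonneg (Real.rpow_nonneg hs0.le _),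
      abs_of_nonneg (by positivity : (0:ℝ) ≤ (c + s)⁻¹)]
    exact mul_le_mul_of_nonneg_left (inv_anti₀ hc (by linarith)) (Real.rpow_nonneg hs0.le _)
  · -- on Ioi 1
    have hbase : IntegrableOn (fun s : ℝ => s ^ (-α - 1)) (Ioi 1) volume :=
      integrableOn_Ioi_rpow_of_lt (by linarith) one_pos
    refine Integrable.mono' hbase (hmeas _) ?_
    filter_upwards [ae_restrict_mem measurableSet_Ioi] with s hs
    have hs0 : (0:ℝ) < s := lt_trans one_pos hs
    rw [Real.norm_eq_abs, abs_mul, abs_of_nonneg (Real.rpow_nonneg hs0.le _),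
      abs_of_nonneg (by positivity : (0:ℝ) ≤ (c + s)⁻¹)]
    have h1 : (c + s)⁻¹ ≤ s⁻¹ := by
      apply inv_anti₀ hs0
      linarith
    calc s ^ (-α) * (c + s)⁻¹ ≤ s ^ (-α) * s⁻¹ :=
          mul_le_mul_of_nonneg_left h1 (Real.rpow_nonneg hs0.le _)
      _ = s ^ (-α - 1) := by
          rw [← Real.rpow_neg_one s, ← Real.rpow_add hs0]; ring_nf

-- ∫ u in Ioi 0, exp (-(c*u)) = c⁻¹ for c > 0
lemma balayage_exp_int {c : ℝ} (hc : 0 < c) :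
    ∫ u in Ioi (0:ℝ), Real.exp (-(c * u)) = c⁻¹ := by
  have := Real.integral_rpow_mul_exp_neg_mul_Ioi (a := 1) (r := c) one_pos hc
  simp only [sub_self] at this
  rw [setIntegral_congr_fun measurableSet_Ioi
    (fun u hu => by rw [Real.rpow_zero, one_mul] :
      ∀ u ∈ Ioi (0:ℝ), Real.exp (-(c * u)) = u ^ (0:ℝ) * Real.exp (-(c * u)))]
  rw [this, Real.Gamma_one, Real.rpow_one, mul_one, one_div]

lemma balayage_gamma_int {β c : ℝ} (hβ : 0 < β) (hc : 0 < c) :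
    ∫ u in Ioi (0:ℝ), u ^ (β - 1) * Real.exp (-(c * u)) = c ^ (-β) * Real.Gamma β := by
  rw [Real.integral_rpow_mul_exp_neg_mul_Ioi hβ hc, one_div,
    ← Real.rpow_neg_one c, ← Real.rpow_mul hc.le]
  ring_nf

lemma balayage_scalar {α t : ℝ} (hα0 : 0 < α) (hα1 : α < 1) (ht : 0 < t) :
    ∫ s in Ioi (0:ℝ), s ^ (-α) * (t + s)⁻¹ = π / Real.sin (π * α) * t ^ (-α) := by
  set μ := volume.restrict (Ioi (0:ℝ)) with hμ
  set f : ℝ → ℝ → ℝ := fun s u => s ^ (-α) * Real.exp (-((t + s) * u)) with hf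
  have hA : ∀ s ∈ Ioi (0:ℝ), ∫ u, f s u ∂μ = s ^ (-α) * (t + s)⁻¹ := by
    intro s hs
    rw [hμ, hf]
    rw [integral_const_mul, balayage_exp_int (by simp at hs; linarith)]
  have hsect : ∀ s ∈ Ioi (0:ℝ), Integrable (fun u => f s u) μ := by
    intro s hs
    simp only [hf, hμ]
    have h0 : (0:ℝ) < t + s := by simp at hs; linarith
    have := exp_neg_integrableOn_Ioi 0 h0
    simp only [neg_mul] at this
    exact this.const_mul _
  have hB : ∀ u ∈ Ioi (0:ℝ),
      ∫ s, f s u ∂μ = Real.Gamma (1-α) * (u ^ (α-1) * Real.exp (-(t*u))) := by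
    intro u hu
    have hu0 : (0:ℝ) < u := hu
    have hcong : ∀ s ∈ Ioi (0:ℝ),
        f s u = (s ^ ((1-α)-1) * Real.exp (-(u*s))) * Real.exp (-(t*u)) := by
      intro s hs
      rw [hf]
      simp only
      rw [show ((1:ℝ)-α)-1 = -α by ring, show -((t+s)*u) = -(u*s) + -(t*u) by ring,
        Real.exp_add, mul_assoc]
    rw [hμ, setIntegral_congr_fun measurableSet_Ioi hcong, integral_mul_const,
      balayage_gamma_int (by linarith) hu0]
    rw [show -((1:ℝ)-α) = α - 1 by ring]
    ring
  have hmeasf : AEStronglyMeasurable (fun p : ℝ × ℝ => f p.1 p.2) (μ.prod μ) := by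
    apply Measurable.aestronglyMeasurable
    have : Measurable (fun p : ℝ × ℝ => p.1 ^ (-α) * Real.exp (-((t + p.1) * p.2))) := by
      fun_prop
    exact this
  have hint : Integrable (fun p : ℝ × ℝ => f p.1 p.2) (μ.prod μ) := by
    rw [MeasureTheory.integrable_prod_iff hmeasf]
    constructor
    · rw [hμ]
      filter_upwards [ae_restrict_mem measurableSet_Ioi] with s hs
      exact hsect s hs
    · apply (balayage_aux_integrableOn hα0 hα1 ht).congr
      rw [hμ]
      filter_upwards [ae_restrict_mem measurableSet_Ioi] with s hs
      have h1 : ∫ u, ‖f s u‖ ∂μ = ∫ u, f s u ∂μ := by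
        apply integral_congr_ae
        apply Filter.Eventually.of_forall
        intro u
        apply Real.norm_of_nonneg
        have : (0:ℝ) < s := hs
        positivity
      rw [h1, hA s hs]
  calc ∫ s in Ioi (0:ℝ), s ^ (-α) * (t + s)⁻¹
      = ∫ s, (∫ u, f s u ∂μ) ∂μ :=
        (setIntegral_congr_fun measurableSet_Ioi (fun s hs => (hA s hs).symm))
    _ = ∫ u, (∫ s, f s u ∂μ) ∂μ := MeasureTheory.integral_integral_swap hint
    _ = ∫ u in Ioi (0:ℝ), Real.Gamma (1-α) * (u ^ (α-1) * Real.exp (-(t*u))) ∂volume := by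
        rw [hμ]; exact setIntegral_congr_fun measurableSet_Ioi hB
    _ = Real.Gamma (1-α) * (t ^ (-α) * Real.Gamma α) := by
        rw [integral_const_mul, balayage_gamma_int hα0 ht]
    _ = π / Real.sin (π * α) * t ^ (-α) := by
        rw [show Real.Gamma (1-α) * (t ^ (-α) * Real.Gamma α)
            = Real.Gamma α * Real.Gamma (1-α) * t ^ (-α) by ring,
          Real.Gamma_mul_Gamma_one_sub]

/-- **Balayage integral representation of negative fractional powers.**
If `a` is a positive invertible element of a unital C*-algebra and `α ∈ (0,1)`, then
`s ↦ s^(-α) (a + s·1)⁻¹` is Bochner integrable on `(0,∞)` and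
`a^(-α) = (sin (πα) / π) • ∫ s in (0,∞), s^(-α) (a + s·1)⁻¹ ds`,
where `a^(-α)` is the continuous functional calculus power. -/
theorem rpow_neg_eq_integral_resolvent
    {𝒜 : Type*} [CStarAlgebra 𝒜] [PartialOrder 𝒜] [StarOrderedRing 𝒜]
    (a : 𝒜) (ha : 0 ≤ a) (ha' : IsUnit a)
    (α : ℝ) (hα : α ∈ Set.Ioo (0 : ℝ) 1) :
    MeasureTheory.IntegrableOn
      (fun s : ℝ => s ^ (-α) • Ring.inverse (a + s • (1 : 𝒜))) (Set.Ioi 0) volume ∧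
    a ^ (-α) = (Real.sin (Real.pi * α) / Real.pi) •
      ∫ s in Set.Ioi (0 : ℝ), s ^ (-α) • Ring.inverse (a + s • (1 : 𝒜)) := by
  obtain ⟨hα0, hα1⟩ := hα
  have hsa : IsSelfAdjoint a := IsSelfAdjoint.of_nonneg ha
  -- a positive lower bound on the spectrum
  obtain ⟨ε, hε, hεK⟩ : ∃ ε : ℝ, 0 < ε ∧ ∀ t ∈ spectrum ℝ a, ε ≤ t := by
    rcases (spectrum ℝ a).eq_empty_or_nonempty with h | h
    · exact ⟨1, one_pos, by simp [h]⟩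
    · obtain ⟨x, hxK, hx⟩ := (spectrum.isCompact a).exists_isLeast h
      refine ⟨x, ?_, fun t ht => hx ht⟩
      have h0 : 0 ≤ x := spectrum_nonneg_of_nonneg ha hxK
      have hne : x ≠ 0 := by
        rintro rfl
        exact (spectrum.zero_notMem_iff ℝ).mpr ha' hxK
      exact lt_of_le_of_ne h0 (Ne.symm hne)
  have hKpos : ∀ t : spectrum ℝ a, 0 < (t : ℝ) := fun t => lt_of_lt_of_le hε (hεK t t.2)
  -- the continuous functional calculus as a continuous linear map
  let φ := cfcHom (R := ℝ) hsa
  let L : C(spectrum ℝ a, ℝ) →L[ℝ] 𝒜 :=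
    { toLinearMap := φ.toAlgHom.toLinearMap
      cont := (cfcHom_isClosedEmbedding (R := ℝ) hsa).continuous }
  have hLφ : ∀ g, L g = φ g := fun g => rfl
  -- the resolvent family as continuous functions on the spectrum
  have hGcont : ∀ s : ℝ, Continuous (fun t : spectrum ℝ a => ((t : ℝ) + max s 0)⁻¹) := by
    intro s
    refine (continuous_subtype_val.add continuous_const).inv₀ fun t => ?_
    have h1 := hKpos t
    have h2 := le_max_right s 0
    exact ne_of_gt (show (0:ℝ) < (t:ℝ) + max s 0 by linarith)
  let G : ℝ → C(spectrum ℝ a, ℝ) := fun s => ⟨_, hGcont s⟩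
  let F : ℝ → C(spectrum ℝ a, ℝ) := fun s => s ^ (-α) • G s
  -- G is Lipschitz
  have hGlip : LipschitzWith (ε⁻¹ * ε⁻¹).toNNReal G := by
    apply LipschitzWith.of_dist_le_mul
    intro s s'
    rw [Real.coe_toNNReal _ (by positivity)]
    refine (ContinuousMap.dist_le (by positivity)).mpr fun t => ?_
    have htε : ε ≤ (t : ℝ) := hεK t t.2
    set x := (t : ℝ) + max s 0 with hxdef
    set y := (t : ℝ) + max s' 0 with hydef
    have hx : ε ≤ x := by have := le_max_right s 0; simp only [hxdef]; linarith
    have hy : ε ≤ y := by have := le_max_right s' 0; simp only [hydef]; linarith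
    have hx0 : 0 < x := lt_of_lt_of_le hε hx
    have hy0 : 0 < y := lt_of_lt_of_le hε hy
    have key : x⁻¹ - y⁻¹ = (y - x) * (x⁻¹ * y⁻¹) := by
      field_simp
    have hyx : |y - x| ≤ dist s s' := by
      rw [hxdef, hydef, Real.dist_eq]
      have := abs_max_sub_max_le_abs s' s 0
      calc |(t : ℝ) + max s' 0 - ((t : ℝ) + max s 0)| = |max s' 0 - max s 0| := by ring_nf
        _ ≤ |s' - s| := abs_max_sub_max_le_abs s' s 0
        _ = |s - s'| := abs_sub_comm _ _
    calc dist (x⁻¹) (y⁻¹) = |y - x| * (x⁻¹ * y⁻¹) := by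
          rw [Real.dist_eq, key, abs_mul, abs_of_nonneg (by positivity : (0:ℝ) ≤ x⁻¹ * y⁻¹)]
      _ ≤ dist s s' * (ε⁻¹ * ε⁻¹) := by
          apply mul_le_mul hyx _ (by positivity) dist_nonneg
          have h1 : x⁻¹ ≤ ε⁻¹ := inv_anti₀ hε hx
          have h2 : y⁻¹ ≤ ε⁻¹ := inv_anti₀ hε hy
          exact mul_le_mul h1 h2 (by positivity) (by positivity)
      _ = ε⁻¹ * ε⁻¹ * dist s s' := by ring
  -- F is integrable on (0, ∞)
  have hFmeas : AEStronglyMeasurable F (volume.restrict (Set.Ioi (0:ℝ))) := by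
    apply ContinuousOn.aestronglyMeasurable _ measurableSet_Ioi
    apply ContinuousOn.fun_smul _ hGlip.continuous.continuousOn
    intro s hs
    exact (Real.continuousAt_rpow_const s (-α) (Or.inl (ne_of_gt hs))).continuousWithinAt
  have hGnorm : ∀ s ∈ Set.Ioi (0:ℝ), ‖G s‖ ≤ (ε + s)⁻¹ := by
    intro s hs
    have hs0 : (0:ℝ) < s := hs
    refine (ContinuousMap.norm_le _ (by positivity)).mpr fun t => ?_
    have htε : ε ≤ (t : ℝ) := hεK t t.2
    have h1 : (0:ℝ) < (t : ℝ) + max s 0 := by have := le_max_right s 0; linarith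
    rw [show (G s) t = (((t:ℝ)) + max s 0)⁻¹ from rfl, Real.norm_eq_abs,
      abs_of_nonneg (by positivity)]
    apply inv_anti₀ (by positivity)
    have := le_max_left s 0
    have : max s 0 = s := max_eq_left hs0.le
    linarith
  have hFint : Integrable F (volume.restrict (Set.Ioi (0:ℝ))) := by
    refine Integrable.mono' (balayage_aux_integrableOn hα0 hα1 hε) hFmeas ?_
    filter_upwards [ae_restrict_mem measurableSet_Ioi] with s hs
    have hs0 : (0:ℝ) < s := hs
    rw [show F s = s ^ (-α) • G s from rfl, norm_smul (s ^ (-α)) (G s), Real.norm_eq_abs,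
      abs_of_nonneg (Real.rpow_nonneg hs0.le _)]
    exact mul_le_mul_of_nonneg_left (hGnorm s hs) (Real.rpow_nonneg hs0.le _)
  -- identification of L (F s) with the resolvent
  have hLF : ∀ s ∈ Set.Ioi (0:ℝ), L (F s) = s ^ (-α) • Ring.inverse (a + s • (1:𝒜)) := by
    intro s hs
    have hs0 : (0:ℝ) < s := hs
    have hfc : ContinuousOn (fun x : ℝ => (x + s)⁻¹) (spectrum ℝ a) := by
      apply ContinuousOn.inv₀ ((continuous_id.add continuous_const).continuousOn)
      intro x hx
      have := hεK x hx
      exact ne_of_gt (show (0:ℝ) < x + s by linarith)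
    have hLG : L (G s) = cfc (fun x : ℝ => (x + s)⁻¹) a := by
      rw [hLφ, cfc_apply (fun x : ℝ => (x + s)⁻¹) a hsa hfc]
      congr 1
      ext t
      simp [G, max_eq_left hs0.le]
    have hid : cfc (fun x : ℝ => x + s) a = a + s • (1:𝒜) := by
      have h := cfc_add_const (R := ℝ) s (fun x : ℝ => x) a (continuousOn_id) hsa
      rw [cfc_id' ℝ a] at h
      rw [h, Algebra.algebraMap_eq_smul_one]
    have hinv : cfc (fun x : ℝ => (x + s)⁻¹) a = Ring.inverse (a + s • (1:𝒜)) := by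
      have h := cfc_inv (R := ℝ) (f := fun x : ℝ => x + s) (a := a)
        (fun x hx => by have := hεK x hx; exact ne_of_gt (by linarith))
        ((continuous_id.add continuous_const).continuousOn) hsa
      rw [hid] at h
      exact h
    rw [show F s = s ^ (-α) • G s from rfl, L.map_smul, hLG, hinv]
  -- integrability of the target function
  have htarget : (fun s : ℝ => s ^ (-α) • Ring.inverse (a + s • (1:𝒜)))
      =ᵐ[volume.restrict (Set.Ioi (0:ℝ))] (fun s => L (F s)) := by
    filter_upwards [ae_restrict_mem measurableSet_Ioi] with s hs
    exact (hLF s hs).symm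
  have hLFint : Integrable (fun s => L (F s)) (volume.restrict (Set.Ioi (0:ℝ))) :=
    L.integrable_comp hFint
  have hTint : MeasureTheory.IntegrableOn
      (fun s : ℝ => s ^ (-α) • Ring.inverse (a + s • (1 : 𝒜))) (Set.Ioi 0) volume :=
    hLFint.congr htarget.symm
  refine ⟨hTint, ?_⟩
  -- compute the integral of F
  have hπα : Real.sin (π * α) ≠ 0 := by
    apply ne_of_gt
    apply Real.sin_pos_of_pos_of_lt_pi (by positivity)
    calc π * α < π * 1 := by
          apply mul_lt_mul_of_pos_left hα1 Real.pi_pos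
      _ = π := mul_one π
  have hf₀cont : Continuous (fun t : spectrum ℝ a => (t : ℝ) ^ (-α)) :=
    Continuous.rpow_const continuous_subtype_val (fun t => Or.inl (ne_of_gt (hKpos t)))
  set f₀ : C(spectrum ℝ a, ℝ) := ⟨_, hf₀cont⟩ with hf₀
  have hintF : ∫ s in Set.Ioi (0:ℝ), F s = (π / Real.sin (π * α)) • f₀ := by
    ext t
    rw [ContinuousMap.integral_apply hFint t]
    have hcong : ∀ s ∈ Set.Ioi (0:ℝ), (F s) t = s ^ (-α) * ((t:ℝ) + s)⁻¹ := by
      intro s hs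
      have hs0 : (0:ℝ) < s := hs
      simp [F, G, max_eq_left hs0.le]
    rw [setIntegral_congr_fun measurableSet_Ioi hcong, balayage_scalar hα0 hα1 (hKpos t)]
    simp [hf₀]
  -- identify L f₀ with a ^ (-α)
  have hLf₀ : L f₀ = a ^ (-α) := by
    have h1 : a ^ (-α) = cfc (fun x : ℝ≥0 => x ^ (-α)) a := rfl
    have h2 : cfc (fun x : ℝ≥0 => x ^ (-α)) a
        = cfc (fun x : ℝ => ((x.toNNReal ^ (-α) : ℝ≥0) : ℝ)) a :=
      cfc_nnreal_eq_real _ a ha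
    have h3 : cfc (fun x : ℝ => ((x.toNNReal ^ (-α) : ℝ≥0) : ℝ)) a
        = cfc (fun x : ℝ => x ^ (-α)) a := by
      apply cfc_congr
      intro x hx
      have hx0 : 0 < x := lt_of_lt_of_le hε (hεK x hx)
      simp only [NNReal.coe_rpow, Real.coe_toNNReal x hx0.le]
    have hfc : ContinuousOn (fun x : ℝ => x ^ (-α)) (spectrum ℝ a) := by
      intro x hx
      have hx0 : 0 < x := lt_of_lt_of_le hε (hεK x hx)
      exact (Real.continuousAt_rpow_const x (-α) (Or.inl (ne_of_gt hx0))).continuousWithinAt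
    rw [hLφ, h1, h2, h3, cfc_apply (fun x : ℝ => x ^ (-α)) a hsa hfc]
    show cfcHom hsa f₀ = cfcHom hsa _
    congr 1
  -- put everything together
  have hIF : ∫ s in Set.Ioi (0:ℝ), s ^ (-α) • Ring.inverse (a + s • (1:𝒜))
      = (π / Real.sin (π * α)) • a ^ (-α) := by
    rw [integral_congr_ae htarget, L.integral_comp_comm hFint, hintF, L.map_smul, hLf₀]
  rw [hIF, smul_smul, div_mul_div_comm, mul_comm (Real.sin (π * α)) π, div_self (by
    positivity), one_smul]
end
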